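/- arXiv:q-alg/9605044 — 6 statements merged into one kernel-verified Lean document; each statement's English description precedes it below -/
import Mathlib

section
/- Let G be a compact Hausdorff topological group with normalized Haar measure, let x₀ ∈ G, and let N be the centralizer of x₀ in G. For continuous F : G×G → ℂ and continuous φ : G → ℂ define (τ(F)φ)(x) := ∫_G F(x x₀ x⁻¹, z) φ(z⁻¹x) dz. Then: (i) τ(F)φ is continuous; (ii) τ(F₁•F₂)φ = τ(F₁)(τ(F₂)φ) for all continuous F₁, F₂ : G×G → ℂ, where (F₁•F₂)(x,y) := ∫_G F₁(x,z) F₂(z⁻¹xz, z⁻¹y) dz; (iii) if χ : N → ℂ is a continuous homomorphism into the unit circle and φ satisfies φ(xn) = χ(n)⁻¹ φ(x) for all x ∈ G, n ∈ N, then τ(F)φ satisfies the same relation. -/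
open MeasureTheory

/-- The quantum double product on `C(G × G)`:
`(F₁ • F₂)(x, y) = ∫_G F₁(x, z) F₂(z⁻¹xz, z⁻¹y) dz`. -/
noncomputable def qdConv {G : Type*} [Group G] [TopologicalSpace G]
    [MeasurableSpace G] (μ : Measure G) (F₁ F₂ : G × G → ℂ) : G × G → ℂ :=
  fun p => ∫ z, F₁ (p.1, z) * F₂ (z⁻¹ * p.1 * z, z⁻¹ * p.2) ∂μ

/-- The operator `(τ(F)φ)(x) = ∫_G F(x x₀ x⁻¹, z) φ(z⁻¹ x) dz`. -/
noncomputable def tauOp {G : Type*} [Group G] [TopologicalSpace G]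
    [MeasurableSpace G] (μ : Measure G) (x₀ : G) (F : G × G → ℂ) (φ : G → ℂ) :
    G → ℂ :=
  fun x => ∫ z, F (x * x₀ * x⁻¹, z) * φ (z⁻¹ * x) ∂μ

/-!
The kernel `(x, z) ↦ F(x x₀ x⁻¹, z) φ(z⁻¹ x)` is jointly continuous on the compact space `G × G`,
and integration is continuous for the sup norm on `C(G, ℂ)`, so `τ(F)φ` is continuous. For the
product formula, Fubini (for continuous integrands on a compact space) exchanges the two integrals,
and left invariance of Haar measure under `z ↦ w z` turns the inner integral into
`(τ(F₂)φ)(w⁻¹ x)`. For the equivariance, an `n` commuting with `x₀` satisfies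
`(x n) x₀ (x n)⁻¹ = x x₀ x⁻¹`, so only the factor `φ(z⁻¹ x n)` sees `n`.
-/

theorem ContinuousMap.continuous_integral {X E : Type*} [TopologicalSpace X] [CompactSpace X]
    [MeasurableSpace X] [BorelSpace X] [NormedAddCommGroup E] [NormedSpace ℝ E]
    [SecondCountableTopologyEither X E] (μ : Measure X) [IsFiniteMeasure μ] :
    Continuous fun f : C(X, E) => ∫ x, f x ∂μ := by
  have h : (fun f : C(X, E) => ∫ x, f x ∂μ) = fun f => ∫ x, toLp (E := E) 1 μ ℝ f x ∂μ :=
    funext fun f => integral_congr_ae (coeFn_toLp μ f).symm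
  rw [h]
  exact MeasureTheory.continuous_integral.comp (toLp (E := E) 1 μ ℝ).continuous

-- Unlike `continuous_parametric_integral_of_continuous`, no first countability is needed.
theorem continuous_integral_of_continuous_uncurry {X Y E : Type*} [TopologicalSpace X]
    [TopologicalSpace Y] [CompactSpace Y] [MeasurableSpace Y] [BorelSpace Y]
    [NormedAddCommGroup E] [NormedSpace ℝ E] [SecondCountableTopologyEither Y E]
    (μ : Measure Y) [IsFiniteMeasure μ] {f : X → Y → E} (hf : Continuous (Function.uncurry f)) :
    Continuous fun x => ∫ y, f x y ∂μ :=
  (ContinuousMap.continuous_integral μ).comp (ContinuousMap.curry ⟨_, hf⟩).continuous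

section TauOp

variable {G : Type*} [Group G] [TopologicalSpace G] [MeasurableSpace G] (μ : Measure G) (x₀ : G)

theorem tauOp_continuous [IsTopologicalGroup G] [CompactSpace G] [BorelSpace G]
    [IsFiniteMeasure μ] {F : G × G → ℂ} {φ : G → ℂ} (hF : Continuous F) (hφ : Continuous φ) :
    Continuous (tauOp μ x₀ F φ) :=
  continuous_integral_of_continuous_uncurry μ
    (f := fun x z => F (x * x₀ * x⁻¹, z) * φ (z⁻¹ * x)) (by fun_prop)

theorem tauOp_inv_mul [MeasurableMul G] [μ.IsMulLeftInvariant] (F : G × G → ℂ) (φ : G → ℂ)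
    (x w : G) :
    tauOp μ x₀ F φ (w⁻¹ * x) =
      ∫ z, F (w⁻¹ * (x * x₀ * x⁻¹) * w, w⁻¹ * z) * φ (z⁻¹ * x) ∂μ := by
  rw [← integral_mul_left_eq_self _ w]
  simp only [tauOp, mul_inv_rev, inv_inv, inv_mul_cancel_left, mul_assoc]

theorem tauOp_qdConv [IsTopologicalGroup G] [CompactSpace G] [BorelSpace G]
    [μ.IsMulLeftInvariant] [IsFiniteMeasureOnCompacts μ] {F₁ F₂ : G × G → ℂ} {φ : G → ℂ}
    (hF₁ : Continuous F₁) (hF₂ : Continuous F₂) (hφ : Continuous φ) :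
    tauOp μ x₀ (qdConv μ F₁ F₂) φ = tauOp μ x₀ F₁ (tauOp μ x₀ F₂ φ) := by
  funext x
  calc tauOp μ x₀ (qdConv μ F₁ F₂) φ x
      = ∫ z, ∫ w, F₁ (x * x₀ * x⁻¹, w) * F₂ (w⁻¹ * (x * x₀ * x⁻¹) * w, w⁻¹ * z) *
          φ (z⁻¹ * x) ∂μ ∂μ := by
        simp only [tauOp, qdConv, integral_mul_const]
    _ = ∫ w, ∫ z, F₁ (x * x₀ * x⁻¹, w) * F₂ (w⁻¹ * (x * x₀ * x⁻¹) * w, w⁻¹ * z) *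
          φ (z⁻¹ * x) ∂μ ∂μ :=
        integral_integral_swap_of_hasCompactSupport (by fun_prop) (isClosed_tsupport _).isCompact
    _ = ∫ w, F₁ (x * x₀ * x⁻¹, w) * tauOp μ x₀ F₂ φ (w⁻¹ * x) ∂μ := by
        simp only [tauOp_inv_mul, mul_assoc, integral_const_mul]

theorem tauOp_mul_of_mem_centralizer (F : G × G → ℂ) {φ : G → ℂ} {n : G}
    (hn : n ∈ Subgroup.centralizer {x₀}) {c : ℂ} (hφ : ∀ x, φ (x * n) = c * φ x) (x : G) :
    tauOp μ x₀ F φ (x * n) = c * tauOp μ x₀ F φ x := by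
  have hconj : x * n * x₀ * (x * n)⁻¹ = x * x₀ * x⁻¹ := by
    rw [mul_assoc x n x₀, Subgroup.mem_centralizer_singleton_iff.mp hn]
    group
  simp only [tauOp, hconj, ← mul_assoc _ x n, hφ, ← integral_const_mul]
  congr with z
  ring

end TauOp

theorem stmt_6_general {G : Type*} [Group G] [TopologicalSpace G] [IsTopologicalGroup G]
    [CompactSpace G] [MeasurableSpace G] [BorelSpace G]
    -- normalized Haar measure:
    (μ : Measure G) [μ.IsHaarMeasure]
    (x₀ : G) (F F₁ F₂ : G × G → ℂ) (φ : G → ℂ)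
    (hF : Continuous F) (hF₁ : Continuous F₁) (hF₂ : Continuous F₂)
    (hφ : Continuous φ) :
    -- (i)
    Continuous (tauOp μ x₀ F φ) ∧
    -- (ii)
    tauOp μ x₀ (qdConv μ F₁ F₂) φ = tauOp μ x₀ F₁ (tauOp μ x₀ F₂ φ) ∧
    -- (iii)
    (∀ χ : Subgroup.centralizer ({x₀} : Set G) → ℂ, Continuous χ →
      (∀ n m, χ (n * m) = χ n * χ m) → (∀ n, ‖χ n‖ = 1) →
      (∀ (x : G) (n : Subgroup.centralizer ({x₀} : Set G)),
          φ (x * (n : G)) = (χ n)⁻¹ * φ x) →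
      ∀ (x : G) (n : Subgroup.centralizer ({x₀} : Set G)),
          tauOp μ x₀ F φ (x * (n : G)) = (χ n)⁻¹ * tauOp μ x₀ F φ x) :=
  ⟨tauOp_continuous μ x₀ hF hφ, tauOp_qdConv μ x₀ hF₁ hF₂ hφ,
    fun _ _ _ _ hχφ x n => tauOp_mul_of_mem_centralizer μ x₀ F n.2 (hχφ · n) x⟩

theorem stmt_6 {G : Type*} [Group G] [TopologicalSpace G] [IsTopologicalGroup G]
    [CompactSpace G] [T2Space G] [MeasurableSpace G] [BorelSpace G]
    -- normalized Haar measure: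
    (μ : Measure G) [μ.IsHaarMeasure] [IsProbabilityMeasure μ]
    (x₀ : G) (F F₁ F₂ : G × G → ℂ) (φ : G → ℂ)
    (hF : Continuous F) (hF₁ : Continuous F₁) (hF₂ : Continuous F₂)
    (hφ : Continuous φ) :
    -- (i)
    Continuous (tauOp μ x₀ F φ) ∧
    -- (ii)
    tauOp μ x₀ (qdConv μ F₁ F₂) φ = tauOp μ x₀ F₁ (tauOp μ x₀ F₂ φ) ∧
    -- (iii)
    (∀ χ : Subgroup.centralizer ({x₀} : Set G) → ℂ, Continuous χ →
      (∀ n m, χ (n * m) = χ n * χ m) → (∀ n, ‖χ n‖ = 1) →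
      (∀ (x : G) (n : Subgroup.centralizer ({x₀} : Set G)),
          φ (x * (n : G)) = (χ n)⁻¹ * φ x) →
      ∀ (x : G) (n : Subgroup.centralizer ({x₀} : Set G)),
          tauOp μ x₀ F φ (x * (n : G)) = (χ n)⁻¹ * tauOp μ x₀ F φ x) :=
  stmt_6_general μ x₀ F F₁ F₂ φ hF hF₁ hF₂ hφ
end

section
/- Let G be a compact Hausdorff topological group with normalized Haar measure and x₀ ∈ G. For continuous F : G×G → ℂ define F*(x,y) := conj(F(y⁻¹xy, y⁻¹)) and (τ(F)φ)(x) := ∫_G F(x x₀ x⁻¹, z) φ(z⁻¹x) dz for continuous φ : G → ℂ. Then for all continuous φ, ψ : G → ℂ: ∫_G (τ(F*)φ)(x) · conj(ψ(x)) dx = ∫_G φ(x) · conj((τ(F)ψ)(x)) dx; that is, τ(F*) is the formal adjoint of τ(F) with respect to the L² inner product of Haar measure. -/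
/-!
Both sides are double integrals of one continuous kernel `K(x, z)` over `G × G`: the right side at
`(x, z)`, the left side at `(z⁻¹x, z⁻¹)`. This substitution is a left translation in `x` followed
by an inversion in `z`, and both preserve the Haar measure, since on a compact group a Haar measure
is the only left-invariant measure of its total mass, hence also right- and inversion-invariant.
-/

open MeasureTheory

/-- The involution `F*(x, y) = conj (F (y⁻¹xy, y⁻¹))` on `C(G × G)`. -/
noncomputable def qdStar {G : Type*} [Group G] (F : G × G → ℂ) : G × G → ℂ :=
  fun p => (starRingEnd ℂ) (F (p.2⁻¹ * p.1 * p.2, p.2⁻¹))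

namespace MeasureTheory.Measure

variable {G : Type*} [Group G] [TopologicalSpace G] [IsTopologicalGroup G] [CompactSpace G]
  [MeasurableSpace G] [BorelSpace G]

theorem eq_of_isMulLeftInvariant_of_measure_univ_eq (ν μ : Measure G) [IsHaarMeasure μ]
    [IsMulLeftInvariant ν] [IsFiniteMeasureOnCompacts ν] (h : ν Set.univ = μ Set.univ) :
    ν = μ := by
  have hν : ν = haarScalarFactor ν μ • μ := isMulInvariant_eq_smul_of_compactSpace ν μ
  have hc : (haarScalarFactor ν μ : ENNReal) * μ Set.univ = 1 * μ Set.univ := by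
    calc _ = ν Set.univ := (congrArg (· Set.univ) hν).symm
      _ = 1 * μ Set.univ := by rw [h, one_mul]
  rw [ENNReal.mul_left_inj (measure_univ_ne_zero.2 (NeZero.ne μ)) (measure_ne_top _ _),
    ENNReal.coe_eq_one] at hc
  rw [hν, hc, one_smul]

instance (priority := 100) IsHaarMeasure.isMulRightInvariant_of_compactSpace
    (μ : Measure G) [IsHaarMeasure μ] : IsMulRightInvariant μ :=
  ⟨fun g => eq_of_isMulLeftInvariant_of_measure_univ_eq _ μ <| by
    rw [map_apply (measurable_mul_const g) MeasurableSet.univ, Set.preimage_univ]⟩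

instance (priority := 100) IsHaarMeasure.isInvInvariant_of_compactSpace
    (μ : Measure G) [IsHaarMeasure μ] : IsInvInvariant μ :=
  ⟨eq_of_isMulLeftInvariant_of_measure_univ_eq _ μ <| by rw [inv_apply, Set.inv_univ]⟩

end MeasureTheory.Measure

namespace MeasureTheory

variable {G E : Type*} [Group G] [TopologicalSpace G] [IsTopologicalGroup G] [CompactSpace G]
  [MeasurableSpace G] [BorelSpace G] [NormedAddCommGroup E] [NormedSpace ℝ E]

theorem integral_integral_inv_mul_inv (μ : Measure G) [μ.IsMulLeftInvariant] [μ.IsInvInvariant]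
    [IsFiniteMeasureOnCompacts μ] {K : G × G → E} (hK : Continuous K) :
    ∫ x, ∫ z, K (z⁻¹ * x, z⁻¹) ∂μ ∂μ = ∫ x, ∫ z, K (x, z) ∂μ ∂μ := by
  have hK' : Continuous fun p : G × G => K (p.2 * p.1, p.2) := by fun_prop
  calc ∫ x, ∫ z, K (z⁻¹ * x, z⁻¹) ∂μ ∂μ = ∫ x, ∫ z, K (z * x, z) ∂μ ∂μ := by
        congr 1 with x
        exact integral_inv_eq_self (fun z => K (z * x, z)) μ
    _ = ∫ z, ∫ x, K (z * x, z) ∂μ ∂μ :=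
        integral_integral_swap_of_hasCompactSupport hK' (.of_compactSpace _)
    _ = ∫ z, ∫ x, K (x, z) ∂μ ∂μ := by
        congr 1 with z
        exact integral_mul_left_eq_self (fun x => K (x, z)) z
    _ = ∫ x, ∫ z, K (x, z) ∂μ ∂μ :=
        (integral_integral_swap_of_hasCompactSupport (f := fun x z => K (x, z)) hK
          (.of_compactSpace _)).symm

end MeasureTheory

theorem stmt_7_general {G : Type*} [Group G] [TopologicalSpace G] [IsTopologicalGroup G]
    [CompactSpace G] [MeasurableSpace G] [BorelSpace G]
    -- normalized Haar measure:
    (μ : Measure G) [μ.IsHaarMeasure]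
    (x₀ : G) (F : G × G → ℂ) (φ ψ : G → ℂ)
    (hF : Continuous F) (hφ : Continuous φ) (hψ : Continuous ψ) :
    ∫ x, tauOp μ x₀ (qdStar F) φ x * (starRingEnd ℂ) (ψ x) ∂μ =
      ∫ x, φ x * (starRingEnd ℂ) (tauOp μ x₀ F ψ x) ∂μ := by
  set K : G × G → ℂ := fun p =>
    starRingEnd ℂ (F (p.1 * x₀ * p.1⁻¹, p.2)) * φ p.1 * starRingEnd ℂ (ψ (p.2⁻¹ * p.1))
  have hK : Continuous K := by fun_prop
  calc ∫ x, tauOp μ x₀ (qdStar F) φ x * starRingEnd ℂ (ψ x) ∂μ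
        = ∫ x, ∫ z, K (z⁻¹ * x, z⁻¹) ∂μ ∂μ := by
        congr 1 with x
        rw [tauOp, ← integral_mul_const]
        congr 1 with z
        simp only [K, qdStar, mul_inv_rev, inv_inv, mul_inv_cancel_left, mul_assoc]
    _ = ∫ x, ∫ z, K (x, z) ∂μ ∂μ := integral_integral_inv_mul_inv μ hK
    _ = ∫ x, φ x * starRingEnd ℂ (tauOp μ x₀ F ψ x) ∂μ := by
        congr 1 with x
        rw [tauOp, ← integral_conj, ← integral_const_mul]
        congr 1 with z
        simp only [K, map_mul]
        ring

theorem stmt_7 {G : Type*} [Group G] [TopologicalSpace G] [IsTopologicalGroup G]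
    [CompactSpace G] [T2Space G] [MeasurableSpace G] [BorelSpace G]
    -- normalized Haar measure:
    (μ : Measure G) [μ.IsHaarMeasure] [IsProbabilityMeasure μ]
    (x₀ : G) (F : G × G → ℂ) (φ ψ : G → ℂ)
    (hF : Continuous F) (hφ : Continuous φ) (hψ : Continuous ψ) :
    ∫ x, tauOp μ x₀ (qdStar F) φ x * (starRingEnd ℂ) (ψ x) ∂μ =
      ∫ x, φ x * (starRingEnd ℂ) (tauOp μ x₀ F ψ x) ∂μ :=
  stmt_7_general μ x₀ F φ ψ hF hφ hψ
end

section
/- Let G be a finite group, g_A ∈ G with centralizer N_A, and α a unitary representation of N_A on a finite-dimensional complex Hilbert space V_α. Let H^A_α := {v : G → V_α | v(xn) = α(n⁻¹)v(x) for all x ∈ G, n ∈ N_A}, with inner product ⟨v,w⟩ := Σ_{x∈G} ⟨v(x),w(x)⟩_{V_α}. For F : G×G → ℂ define (π^A_α(F)v)(x) := Σ_{y∈G} F(x g_A x⁻¹, y) v(y⁻¹x). Then: (i) π^A_α(F) maps H^A_α into H^A_α; (ii) π^A_α(F₁•F₂) = π^A_α(F₁) ∘ π^A_α(F₂), where (F₁•F₂)(x,y)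 := Σ_{z∈G} F₁(x,z) F₂(z⁻¹xz, z⁻¹y); (iii) π^A_α(F*) is the adjoint of π^A_α(F) on H^A_α, where F*(x,y) := conj(F(y⁻¹xy, y⁻¹)). -/
open scoped BigOperators

/-- The quantum double product on `C(G × G)` for a finite group `G`. -/
noncomputable def qdConvF {G : Type*} [Group G] [Fintype G]
    (F₁ F₂ : G × G → ℂ) : G × G → ℂ :=
  fun p => ∑ z : G, F₁ (p.1, z) * F₂ (z⁻¹ * p.1 * z, z⁻¹ * p.2)

/-- The involution `F*(x, y) = conj (F (y⁻¹xy, y⁻¹))` on `C(G × G)`. -/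
noncomputable def qdStarF {G : Type*} [Group G] (F : G × G → ℂ) : G × G → ℂ :=
  fun p => (starRingEnd ℂ) (F (p.2⁻¹ * p.1 * p.2, p.2⁻¹))

/-- The operator `(π^A_α(F)v)(x) = ∑_{y ∈ G} F(x g_A x⁻¹, y) v(y⁻¹ x)`. -/
noncomputable def piOp {G : Type*} [Group G] [Fintype G] {V : Type*}
    [AddCommGroup V] [Module ℂ V] (gA : G) (F : G × G → ℂ) (v : G → V) :
    G → V :=
  fun x => ∑ y : G, F (x * gA * x⁻¹, y) • v (y⁻¹ * x)

/-- Membership in the Hilbert space `H^A_α`: the equivariance condition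
`v(xn) = α(n⁻¹) v(x)` for all `x ∈ G`, `n ∈ N_A`. -/
def IsEquivariant {G : Type*} [Group G] {V : Type*} [NormedAddCommGroup V]
    [InnerProductSpace ℂ V] (gA : G)
    (α : Subgroup.centralizer ({gA} : Set G) →* (V ≃ₗᵢ[ℂ] V)) (v : G → V) :
    Prop :=
  ∀ (x : G) (n : Subgroup.centralizer ({gA} : Set G)),
    v (x * (n : G)) = α n⁻¹ (v x)

/-!
Since `gA` commutes with every `n ∈ N_A`, the point `x gA x⁻¹` at which `π(F)` evaluates `F`
depends only on the coset `x N_A`, so `π(F)` commutes with the right `N_A`-action and preserves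
`H^A_α`. Multiplicativity and the adjoint formula are reindexings of the finite sums over `G`:
`y ↦ z⁻¹ y` for the product, `(x, y) ↦ (y⁻¹ x, y⁻¹)` for the involution.
-/

section QuantumDouble

variable {G : Type*} [Group G]

lemma conj_mul_centralizer_eq {gA x : G} (n : Subgroup.centralizer ({gA} : Set G)) :
    x * n * gA * (x * n)⁻¹ = x * gA * x⁻¹ := by
  have hcomm : gA * n = n * gA := Subgroup.mem_centralizer_iff.mp n.2 gA rfl
  rw [mul_assoc x, ← hcomm]
  group

variable [Fintype G]

lemma isEquivariant_piOp {V : Type*} [NormedAddCommGroup V] [InnerProductSpace ℂ V] {gA : G}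
    {α : Subgroup.centralizer ({gA} : Set G) →* (V ≃ₗᵢ[ℂ] V)} {v : G → V}
    (hv : IsEquivariant gA α v) (F : G × G → ℂ) : IsEquivariant gA α (piOp gA F v) := by
  intro x n
  simp only [piOp, conj_mul_centralizer_eq, map_sum, map_smul]
  refine Finset.sum_congr rfl fun y _ => ?_
  rw [← mul_assoc, hv]

lemma piOp_qdConvF {V : Type*} [AddCommGroup V] [Module ℂ V] (gA : G) (F₁ F₂ : G × G → ℂ)
    (v : G → V) : piOp gA (qdConvF F₁ F₂) v = piOp gA F₁ (piOp gA F₂ v) := by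
  funext x
  simp only [piOp, qdConvF, Finset.sum_smul, smul_smul, Finset.smul_sum]
  rw [Finset.sum_comm]
  refine Finset.sum_congr rfl fun z _ => ?_
  refine Fintype.sum_equiv (Equiv.mulLeft z⁻¹) _ _ fun y => ?_
  rw [Equiv.coe_mulLeft, show z⁻¹ * (x * gA * x⁻¹) * z = z⁻¹ * x * gA * (z⁻¹ * x)⁻¹ by group,
    show (z⁻¹ * y)⁻¹ * (z⁻¹ * x) = y⁻¹ * x by group]

@[simps]
def invMulInvEquiv : G × G ≃ G × G where
  toFun p := (p.2⁻¹ * p.1, p.2⁻¹)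
  invFun p := (p.2⁻¹ * p.1, p.2⁻¹)
  left_inv p := by simp
  right_inv p := by simp

lemma sum_inner_piOp_qdStarF {V : Type*} [NormedAddCommGroup V] [InnerProductSpace ℂ V]
    (gA : G) (F : G × G → ℂ) (v w : G → V) :
    ∑ x, inner ℂ (piOp gA (qdStarF F) v x) (w x) = ∑ x, inner ℂ (v x) (piOp gA F w x) := by
  simp only [piOp, qdStarF, sum_inner, inner_sum, inner_smul_left, inner_smul_right,
    starRingEnd_self_apply]
  rw [← Fintype.sum_prod_type', ← Fintype.sum_prod_type']
  refine Fintype.sum_equiv invMulInvEquiv _ _ fun p => ?_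
  simp only [invMulInvEquiv_apply]
  rw [show p.2⁻¹ * (p.1 * gA * p.1⁻¹) * p.2 = p.2⁻¹ * p.1 * gA * (p.2⁻¹ * p.1)⁻¹ by group,
    inv_inv, mul_inv_cancel_left]

end QuantumDouble

theorem stmt_8_general {G : Type*} [Group G] [Fintype G]
    {V : Type*} [NormedAddCommGroup V] [InnerProductSpace ℂ V]
    (gA : G)
    (α : Subgroup.centralizer ({gA} : Set G) →* (V ≃ₗᵢ[ℂ] V)) :
    -- (i)
    (∀ (F : G × G → ℂ) (v : G → V), IsEquivariant gA α v →
        IsEquivariant gA α (piOp gA F v)) ∧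
    -- (ii)
    (∀ (F₁ F₂ : G × G → ℂ) (v : G → V), IsEquivariant gA α v →
        piOp gA (qdConvF F₁ F₂) v = piOp gA F₁ (piOp gA F₂ v)) ∧
    -- (iii)
    (∀ (F : G × G → ℂ) (v w : G → V), IsEquivariant gA α v →
        IsEquivariant gA α w →
        ∑ x : G, (inner ℂ (piOp gA (qdStarF F) v x) (w x) : ℂ) =
          ∑ x : G, (inner ℂ (v x) (piOp gA F w x) : ℂ)) :=
  ⟨fun F _ hv => isEquivariant_piOp hv F, fun F₁ F₂ v _ => piOp_qdConvF gA F₁ F₂ v,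
    fun F v w _ _ => sum_inner_piOp_qdStarF gA F v w⟩

theorem stmt_8 {G : Type*} [Group G] [Fintype G]
    {V : Type*} [NormedAddCommGroup V] [InnerProductSpace ℂ V]
    [FiniteDimensional ℂ V] (gA : G)
    (α : Subgroup.centralizer ({gA} : Set G) →* (V ≃ₗᵢ[ℂ] V)) :
    -- (i)
    (∀ (F : G × G → ℂ) (v : G → V), IsEquivariant gA α v →
        IsEquivariant gA α (piOp gA F v)) ∧
    -- (ii)
    (∀ (F₁ F₂ : G × G → ℂ) (v : G → V), IsEquivariant gA α v →
        piOp gA (qdConvF F₁ F₂) v = piOp gA F₁ (piOp gA F₂ v)) ∧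
    -- (iii)
    (∀ (F : G × G → ℂ) (v w : G → V), IsEquivariant gA α v →
        IsEquivariant gA α w →
        ∑ x : G, (inner ℂ (piOp gA (qdStarF F) v x) (w x) : ℂ) =
          ∑ x : G, (inner ℂ (v x) (piOp gA F w x) : ℂ)) :=
  stmt_8_general gA α
end

section
/- Let G be a finite group, g_A ∈ G with centralizer N_A, and α an irreducible unitary representation of N_A on a finite-dimensional complex Hilbert space V_α. Then the representation π^A_α of the quantum double D(G) on H^A_α, given by (π^A_α(F)v)(x) := Σ_{y∈G} F(x g_A x⁻¹, y) v(y⁻¹x), is irreducible: the only subspaces of H^A_α invariant under all operators π^A_α(F) are {0} and H^A_α. -/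
open scoped BigOperators

/-- The Hilbert space `H^A_α` of functions `v : G → V` with
`v(xn) = α(n⁻¹) v(x)` for all `x ∈ G`, `n ∈ N_A`, as a subspace of `G → V`. -/
def QDHSpace {G : Type*} [Group G] {V : Type*} [NormedAddCommGroup V]
    [InnerProductSpace ℂ V] (gA : G)
    (α : Subgroup.centralizer ({gA} : Set G) →* (V ≃ₗᵢ[ℂ] V)) :
    Submodule ℂ (G → V) where
  carrier := {v | ∀ (x : G) (n : Subgroup.centralizer ({gA} : Set G)),
    v (x * (n : G)) = α n⁻¹ (v x)}
  add_mem' := by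
    intro a b ha hb x n
    simp [ha x n, hb x n]
  zero_mem' := by
    intro x n
    simp
  smul_mem' := by
    intro c a ha x n
    simp [ha x n]

theorem stmt_9 {G : Type*} [Group G] [Fintype G]
    {V : Type*} [NormedAddCommGroup V] [InnerProductSpace ℂ V]
    [FiniteDimensional ℂ V] (gA : G)
    (α : Subgroup.centralizer ({gA} : Set G) →* (V ≃ₗᵢ[ℂ] V))
    -- `α` is irreducible:
    (hαirr : ∀ U : Submodule ℂ V,
      (∀ (n : Subgroup.centralizer ({gA} : Set G)), ∀ v ∈ U, α n v ∈ U) →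
      U = ⊥ ∨ U = ⊤) :
    -- then `π^A_α` is irreducible on `H^A_α`:
    ∀ W : Submodule ℂ (G → V), W ≤ QDHSpace gA α →
      (∀ F : G × G → ℂ, ∀ v ∈ W, piOp gA F v ∈ W) →
      W = ⊥ ∨ W = QDHSpace gA α := by
  classical
  intro W hWle hWinv
  rcases eq_or_ne W ⊥ with hbot | hne
  · exact Or.inl hbot
  right
  -- the coset condition
  have key : ∀ c x : G, x * gA * x⁻¹ = c * gA * c⁻¹ ↔
      c⁻¹ * x ∈ Subgroup.centralizer ({gA} : Set G) := by
    intro c x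
    rw [Subgroup.mem_centralizer_singleton_iff]
    constructor
    · intro h
      have := congrArg (fun t => c⁻¹ * t * x) h
      simpa [mul_assoc] using this
    · intro h
      have := congrArg (fun t => c * t * x⁻¹) h
      simpa [mul_assoc] using this
  -- a handy delta-sum computation
  have hdelta : ∀ (c : G) (f : G → V),
      (∑ y : G, (if y = c then (1 : ℂ) else 0) • f y) = f c := by
    intro c f
    simp [ite_smul]
  -- translation operators preserve W
  have htrans : ∀ (c : G), ∀ w ∈ W, (fun x => w (c⁻¹ * x)) ∈ W := by
    intro c w hw
    have h := hWinv (fun p => if p.2 = c then 1 else 0) w hw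
    have : piOp gA (fun p => if p.2 = c then 1 else 0) w
        = fun x => w (c⁻¹ * x) := by
      funext x
      simp only [piOp]
      exact hdelta c fun y => w (y⁻¹ * x)
    rwa [this] at h
  -- the space of values at 1
  set U : Submodule ℂ V := W.map (LinearMap.proj (R := ℂ) (φ := fun _ : G => V) 1)
    with hU
  have hUval : ∀ a : V, a ∈ U ↔ ∃ w ∈ W, w 1 = a := by
    intro a
    simp [hU, Submodule.mem_map]
  -- U is invariant under α
  have hUinv : ∀ (n : Subgroup.centralizer ({gA} : Set G)), ∀ v ∈ U, α n v ∈ U := by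
    intro n v hv
    obtain ⟨w, hw, rfl⟩ := (hUval v).mp hv
    refine (hUval _).mpr ⟨fun x => w ((n : G)⁻¹ * x), htrans _ w hw, ?_⟩
    have := hWle hw 1 n⁻¹
    simpa using this
  -- U is nonzero
  obtain ⟨v, hvW, hv0⟩ := Submodule.exists_mem_ne_zero_of_ne_bot hne
  obtain ⟨x₀, hx₀⟩ : ∃ x₀, v x₀ ≠ 0 := by
    by_contra h
    push_neg at h
    exact hv0 (funext h)
  have hUne : U ≠ ⊥ := by
    intro h
    have hmem : v x₀ ∈ U := by
      refine (hUval _).mpr ⟨fun x => v ((x₀⁻¹)⁻¹ * x), htrans _ v hvW, ?_⟩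
      simp
    rw [h, Submodule.mem_bot] at hmem
    exact hx₀ hmem
  have hUtop : U = ⊤ := (hαirr U hUinv).resolve_left hUne
  -- choose preimages
  have hch : ∀ a : V, ∃ w ∈ W, w 1 = a := by
    intro a
    exact (hUval a).mp (hUtop ▸ Submodule.mem_top)
  -- prove W = QDHSpace
  refine le_antisymm hWle ?_
  intro u hu
  choose wc hwcW hwc1 using fun c : G => hch (u c)
  set s : G → G → V := fun c =>
    piOp gA (fun p => if p.1 = c * gA * c⁻¹ ∧ p.2 = c then 1 else 0) (wc c)
    with hs
  have hsW : ∀ c, s c ∈ W := fun c => hWinv _ _ (hwcW c)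
  set c0 : ℂ := ∑ d : G, if d ∈ Subgroup.centralizer ({gA} : Set G) then (1 : ℂ) else 0
    with hc0
  have hc0ne : c0 ≠ 0 := by
    rw [hc0, Finset.sum_boole]
    have h1 : (1 : G) ∈ Finset.univ.filter
        (fun d => d ∈ Subgroup.centralizer ({gA} : Set G)) :=
      Finset.mem_filter.mpr ⟨Finset.mem_univ _, Subgroup.one_mem _⟩
    have hpos : 0 < (Finset.univ.filter
        (fun d => d ∈ Subgroup.centralizer ({gA} : Set G))).card :=
      Finset.card_pos.mpr ⟨1, h1⟩
    exact_mod_cast Nat.cast_ne_zero.mpr hpos.ne'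
  -- the pointwise value of s c
  have hsval : ∀ c x, s c x =
      if c⁻¹ * x ∈ Subgroup.centralizer ({gA} : Set G) then u x else 0 := by
    intro c x
    rw [hs]
    simp only [piOp]
    have step1 : (∑ y : G,
        (if x * gA * x⁻¹ = c * gA * c⁻¹ ∧ y = c then (1 : ℂ) else 0) • wc c (y⁻¹ * x))
        = if x * gA * x⁻¹ = c * gA * c⁻¹ then wc c (c⁻¹ * x) else 0 := by
      by_cases hA : x * gA * x⁻¹ = c * gA * c⁻¹
      · simp only [hA, true_and, if_pos]
        exact hdelta c fun y => wc c (y⁻¹ * x)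
      · simp [hA]
    rw [step1, if_congr (key c x) rfl rfl]
    by_cases hm : c⁻¹ * x ∈ Subgroup.centralizer ({gA} : Set G)
    · rw [if_pos hm, if_pos hm]
      set m : Subgroup.centralizer ({gA} : Set G) := ⟨c⁻¹ * x, hm⟩ with hmdef
      have h1 : wc c (c⁻¹ * x) = α m⁻¹ (wc c 1) := by
        have := hWle (hwcW c) 1 m
        simpa using this
      have h2 : u c = α m (u x) := by
        have := hu x m⁻¹
        have hc : x * ((m⁻¹ : Subgroup.centralizer ({gA} : Set G)) : G) = c := by
          simp [hmdef, mul_assoc]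
        rw [hc] at this
        simpa using this
      rw [h1, hwc1, h2]
      have h3 : (α m⁻¹ * α m) (u x) = u x := by
        rw [← map_mul, inv_mul_cancel, map_one]
        simp
      simpa using h3

    · rw [if_neg hm, if_neg hm]
  -- sum up
  have hsum : (∑ c : G, s c) = c0 • u := by
    funext x
    rw [Finset.sum_apply]
    simp only [hsval]
    rw [show (∑ c : G, if c⁻¹ * x ∈ Subgroup.centralizer ({gA} : Set G) then u x else 0)
        = ∑ d : G, if d ∈ Subgroup.centralizer ({gA} : Set G) then u x else 0 from
      Fintype.sum_equiv ((Equiv.inv G).trans (Equiv.mulRight x)) _ _ (by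
        intro d
        simp)]
    rw [hc0, Pi.smul_apply, Finset.sum_smul]
    exact Finset.sum_congr rfl fun d _ => by
      by_cases h : d ∈ Subgroup.centralizer ({gA} : Set G) <;> simp [h]
  have : u = c0⁻¹ • ∑ c : G, s c := by
    rw [hsum, smul_smul, inv_mul_cancel₀ hc0ne, one_smul]
  rw [this]
  exact Submodule.smul_mem _ _ (Submodule.sum_mem _ fun c _ => hsW c)
end

section
/- Let G be a finite group, g_A ∈ G with centralizer N_A, and α a unitary representation of N_A on a finite-dimensional complex Hilbert space V_α. On the space of functions F : G×N_A → ℂ define the product (F₁•F₂)(x,n) := Σ_{m∈N_A} F₁(x,m) F₂(m⁻¹xm, m⁻¹n). Then the linear map Π_α(F) := Σ_{n∈N_A} F(g_A, n) α(n) from this algebra to the endomorphisms of V_α is multiplicative: Π_α(F₁•F₂) = Π_α(F₁) ∘ Π_α(F₂). -/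
open scoped BigOperators

/-- The product on the subalgebra `B_A`, modeled as functions `G × N_A → ℂ`:
`(F₁ • F₂)(x, n) = ∑_{m ∈ N_A} F₁(x, m) F₂(m⁻¹ x m, m⁻¹ n)`. -/
noncomputable def bConv {G : Type*} [Group G] (gA : G)
    [Fintype (Subgroup.centralizer ({gA} : Set G))]
    (F₁ F₂ : G × Subgroup.centralizer ({gA} : Set G) → ℂ) :
    G × Subgroup.centralizer ({gA} : Set G) → ℂ :=
  fun p => ∑ m : Subgroup.centralizer ({gA} : Set G),
    F₁ (p.1, m) * F₂ ((m : G)⁻¹ * p.1 * (m : G), m⁻¹ * p.2)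

/-- The map `Π_α(F) = ∑_{n ∈ N_A} F(g_A, n) α(n)`. -/
noncomputable def bPi {G : Type*} [Group G] (gA : G)
    [Fintype (Subgroup.centralizer ({gA} : Set G))]
    {V : Type*} [NormedAddCommGroup V] [InnerProductSpace ℂ V]
    (α : Subgroup.centralizer ({gA} : Set G) →* (V ≃ₗᵢ[ℂ] V))
    (F : G × Subgroup.centralizer ({gA} : Set G) → ℂ) : V →ₗ[ℂ] V :=
  ∑ n : Subgroup.centralizer ({gA} : Set G),
    F (gA, n) • ((α n).toLinearEquiv.toLinearMap)

theorem stmt_12 {G : Type*} [Group G] [Fintype G] (gA : G)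
    [Fintype (Subgroup.centralizer ({gA} : Set G))]
    {V : Type*} [NormedAddCommGroup V] [InnerProductSpace ℂ V]
    [FiniteDimensional ℂ V]
    (α : Subgroup.centralizer ({gA} : Set G) →* (V ≃ₗᵢ[ℂ] V))
    (F₁ F₂ : G × Subgroup.centralizer ({gA} : Set G) → ℂ) :
    bPi gA α (bConv gA F₁ F₂) = (bPi gA α F₁).comp (bPi gA α F₂) := by
  classical
  have hfix : ∀ m : Subgroup.centralizer ({gA} : Set G),
      (m : G)⁻¹ * gA * (m : G) = gA := by
    intro m
    have h := Subgroup.mem_centralizer_iff.mp m.2 gA (Set.mem_singleton gA)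
    rw [mul_assoc, h, ← mul_assoc, inv_mul_cancel, one_mul]
  rw [← Module.End.mul_eq_comp]
  unfold bPi bConv
  rw [Finset.sum_mul_sum]
  simp only [Finset.sum_smul, smul_mul_smul_comm, hfix]
  rw [Finset.sum_comm]
  refine Finset.sum_congr rfl fun m _ => ?_
  refine Fintype.sum_equiv (Equiv.mulLeft m⁻¹) _ _ fun n => ?_
  simp only [Equiv.coe_mulLeft]
  congr 1
  ext v
  have h : m * (m⁻¹ * n) = n := by group
  rw [← h, map_mul]
  simp
end

section
/- Consider the action of SL(2,ℝ) on itself by conjugation, and let Q be the quotient topological space of SL(2,ℝ) by the equivalence relation 'being conjugate in SL(2,ℝ)', endowed with the quotient topology. Then Q is a T0 space. -/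
/-- `SL(2, ℝ)` with its standard topology (as a subspace of the 2×2 real
matrices). -/
instance : TopologicalSpace (Matrix.SpecialLinearGroup (Fin 2) ℝ) :=
  inferInstanceAs (TopologicalSpace {A : Matrix (Fin 2) (Fin 2) ℝ // A.det = 1})

open Matrix

abbrev SL2 := Matrix.SpecialLinearGroup (Fin 2) ℝ

/-- matrix with columns `u`, `w` -/
def colM (u w : Fin 2 → ℝ) : Matrix (Fin 2) (Fin 2) ℝ :=
  Matrix.of ![![u 0, w 0], ![u 1, w 1]]

def Bf (M : SL2) (u : Fin 2 → ℝ) : ℝ := (colM u (M.1 *ᵥ u)).det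

lemma detM (M : SL2) : M.1 0 0 * M.1 1 1 - M.1 0 1 * M.1 1 0 = 1 := by
  have := M.2; rwa [Matrix.det_fin_two] at this

lemma colM_mulVec (A : Matrix (Fin 2) (Fin 2) ℝ) (u w : Fin 2 → ℝ) :
    colM (A *ᵥ u) (A *ᵥ w) = A * colM u w := by
  ext i j
  fin_cases i <;> fin_cases j <;>
    simp [colM, Matrix.mul_apply, Matrix.mulVec, dotProduct, Fin.sum_univ_two]

lemma Bf_conj (g M : SL2) (u : Fin 2 → ℝ) :
    Bf (g * M * g⁻¹) (g.1 *ᵥ u) = Bf M u := by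
  have h1 : (g * M * g⁻¹).1 *ᵥ (g.1 *ᵥ u) = g.1 *ᵥ (M.1 *ᵥ u) := by
    rw [Matrix.mulVec_mulVec, Matrix.mulVec_mulVec]
    congr 1
    have : (g * M * g⁻¹).1 * g.1 = (g * M * g⁻¹ * g : SL2).1 := rfl
    rw [this]
    congr 1
    have h2 : g * M * g⁻¹ * g = g * M := by group
    rw [h2]
    rfl
  rw [Bf, h1, colM_mulVec, Matrix.det_mul, g.2, one_mul, Bf]

def Cm (t : ℝ) : SL2 :=
  ⟨Matrix.of ![![0, -1], ![1, t]], by simp [Matrix.det_fin_two]⟩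

def Dm (t : ℝ) : SL2 :=
  ⟨Matrix.of ![![t, 1], ![-1, 0]], by simp [Matrix.det_fin_two]⟩

lemma isConj_C (M : SL2) (u : Fin 2 → ℝ) (hu : Bf M u = 1) :
    IsConj (Cm (M.1 0 0 + M.1 1 1)) M := by
  have hd := detM M
  set P : SL2 := ⟨colM u (M.1 *ᵥ u), hu⟩ with hP
  rw [isConj_iff]
  refine ⟨P, ?_⟩
  rw [mul_inv_eq_iff_eq_mul]
  apply Subtype.ext
  show P.1 * (Cm (M.1 0 0 + M.1 1 1)).1 = M.1 * P.1
  ext i j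
  fin_cases i <;> fin_cases j <;>
    simp [hP, colM, Cm, Matrix.mul_apply, Matrix.mulVec, dotProduct,
      Fin.sum_univ_two] <;>
    first
      | ring1
      | linear_combination (u 0) * hd
      | linear_combination (u 1) * hd

lemma isConj_D (M : SL2) (u : Fin 2 → ℝ) (hu : Bf M u = -1) :
    IsConj (Dm (M.1 0 0 + M.1 1 1)) M := by
  have hd := detM M
  have hdetP : (colM (M.1 *ᵥ u) u).det = 1 := by
    have h0 : (colM u (M.1 *ᵥ u)).det = -1 := hu
    rw [Matrix.det_fin_two] at h0 ⊢
    simp only [colM, Matrix.of_apply] at h0 ⊢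
    simp at h0 ⊢
    linarith
  set P : SL2 := ⟨colM (M.1 *ᵥ u) u, hdetP⟩ with hP
  rw [isConj_iff]
  refine ⟨P, ?_⟩
  rw [mul_inv_eq_iff_eq_mul]
  apply Subtype.ext
  show P.1 * (Dm (M.1 0 0 + M.1 1 1)).1 = M.1 * P.1
  ext i j
  fin_cases i <;> fin_cases j <;>
    simp [hP, colM, Dm, Matrix.mul_apply, Matrix.mulVec, dotProduct,
      Fin.sum_univ_two] <;>
    first
      | ring1
      | linear_combination (u 0) * hd
      | linear_combination (u 1) * hd

lemma Bf_smul (M : SL2) (s : ℝ) (u : Fin 2 → ℝ) :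
    Bf M (s • u) = s ^ 2 * Bf M u := by
  simp only [Bf, colM, Matrix.det_fin_two, Matrix.of_apply, Matrix.mulVec,
    dotProduct, Fin.sum_univ_two]
  simp
  ring

lemma exists_one (M : SL2) (h : ∃ u, 0 < Bf M u) : ∃ u, Bf M u = 1 := by
  obtain ⟨u, hu⟩ := h
  refine ⟨(Real.sqrt (Bf M u))⁻¹ • u, ?_⟩
  rw [Bf_smul, inv_pow, Real.sq_sqrt hu.le, inv_mul_cancel₀ hu.ne']

lemma exists_negone (M : SL2) (h : ∃ u, Bf M u < 0) : ∃ u, Bf M u = -1 := by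
  obtain ⟨u, hu⟩ := h
  refine ⟨(Real.sqrt (-Bf M u))⁻¹ • u, ?_⟩
  rw [Bf_smul, inv_pow, Real.sq_sqrt (by linarith)]
  rw [inv_mul_eq_div, div_neg, div_self hu.ne]

lemma Bf_allzero (M : SL2) (h0 : Bf M ![1,0] = 0) (h1 : Bf M ![0,1] = 0)
    (h2 : Bf M ![1,1] = 0) : M = 1 ∨ M = -1 := by
  have hd := detM M
  simp only [Bf, colM, Matrix.det_fin_two, Matrix.of_apply, Matrix.mulVec,
    dotProduct, Fin.sum_univ_two] at h0 h1 h2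
  simp at h0 h1 h2
  have hc : M.1 1 0 = 0 := by linarith
  have hb : M.1 0 1 = 0 := by linarith
  have had : M.1 1 1 = M.1 0 0 := by linarith
  have ha : M.1 0 0 = 1 ∨ M.1 0 0 = -1 := by
    have hsq : M.1 0 0 * M.1 0 0 = 1 := by
      linear_combination hd - M.1 0 0 * had + M.1 1 0 * hb
    rcases mul_self_eq_one_iff.1 hsq with h | h
    · exact Or.inl h
    · exact Or.inr h
  rcases ha with h | h
  · left
    apply Subtype.ext
    ext i j
    fin_cases i <;> fin_cases j <;>
      simp [Matrix.SpecialLinearGroup.coe_one, hb, hc, h, had]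
  · right
    apply Subtype.ext
    ext i j
    fin_cases i <;> fin_cases j <;>
      simp [hb, hc, h, had]

lemma trace_conj {M N : SL2} (h : IsConj M N) : M.1.trace = N.1.trace := by
  rw [isConj_iff] at h
  obtain ⟨g, rfl⟩ := h
  show M.1.trace = ((g * M) * g⁻¹).1.trace
  rw [Matrix.SpecialLinearGroup.coe_mul, Matrix.trace_mul_comm]
  have h2 : (g⁻¹).1 * (g * M).1 = ((g⁻¹ * (g * M)) : SL2).1 := rfl
  rw [h2, inv_mul_cancel_left]

lemma centry (i j : Fin 2) : Continuous fun M : SL2 => M.1 i j := by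
  have h1 : Continuous fun A : Matrix (Fin 2) (Fin 2) ℝ => A i j :=
    (continuous_apply j).comp (continuous_apply i)
  exact h1.comp continuous_subtype_val

lemma continuous_Bf (u : Fin 2 → ℝ) : Continuous fun M : SL2 => Bf M u := by
  have hB : ∀ M : SL2, Bf M u =
      u 0 * (M.1 1 0 * u 0 + M.1 1 1 * u 1) - u 1 * (M.1 0 0 * u 0 + M.1 0 1 * u 1) := by
    intro M
    simp [Bf, colM, Matrix.det_fin_two, Matrix.mulVec, dotProduct, Fin.sum_univ_two]
    ring
  simp only [hB]
  exact (continuous_const.mul (((centry 1 0).mul continuous_const).add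
    ((centry 1 1).mul continuous_const))).sub
    (continuous_const.mul (((centry 0 0).mul continuous_const).add
    ((centry 0 1).mul continuous_const)))

lemma key_sat (O : Set SL2) (hO : IsOpen O)
    (hinv : ∀ M N : SL2, IsConj M N → M ∈ O → N ∈ O) (x y : SL2)
    (h : Inseparable (Quotient.mk (IsConj.setoid SL2) x) (Quotient.mk (IsConj.setoid SL2) y)) :
    x ∈ O ↔ y ∈ O := by
  set π := Quotient.mk (IsConj.setoid SL2) with hπ
  have hsat : π ⁻¹' (π '' O) = O := by
    ext z
    constructor
    · rintro ⟨w, hw, hz⟩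
      exact hinv w z (Quotient.exact hz) hw
    · intro hz
      exact ⟨z, hz, rfl⟩
  have hopen : IsOpen (π '' O) := by
    rw [show IsOpen (π '' O) ↔ IsOpen (π ⁻¹' (π '' O)) from isOpen_coinduced]
    rw [hsat]
    exact hO
  have h2 := inseparable_iff_forall_isOpen.1 h _ hopen
  constructor
  · intro hx
    have : π y ∈ π '' O := h2.1 ⟨x, hx, rfl⟩
    rw [← hsat]; exact this
  · intro hy
    have : π x ∈ π '' O := h2.2 ⟨y, hy, rfl⟩
    rw [← hsat]; exact this

lemma isOpen_Opos : IsOpen {M : SL2 | ∃ u, 0 < Bf M u} := by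
  have h : {M : SL2 | ∃ u, 0 < Bf M u} = ⋃ u, {M : SL2 | 0 < Bf M u} := by
    ext M; simp [Set.mem_iUnion]
  rw [h]
  exact isOpen_iUnion fun u => isOpen_lt continuous_const (continuous_Bf u)

lemma isOpen_Oneg : IsOpen {M : SL2 | ∃ u, Bf M u < 0} := by
  have h : {M : SL2 | ∃ u, Bf M u < 0} = ⋃ u, {M : SL2 | Bf M u < 0} := by
    ext M; simp [Set.mem_iUnion]
  rw [h]
  exact isOpen_iUnion fun u => isOpen_lt (continuous_Bf u) continuous_const

lemma inv_Opos : ∀ M N : SL2, IsConj M N → M ∈ {M : SL2 | ∃ u, 0 < Bf M u} →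
    N ∈ {M : SL2 | ∃ u, 0 < Bf M u} := by
  rintro M N h ⟨u, hu⟩
  rw [isConj_iff] at h
  obtain ⟨g, rfl⟩ := h
  exact ⟨g.1 *ᵥ u, by rwa [Bf_conj]⟩

lemma inv_Oneg : ∀ M N : SL2, IsConj M N → M ∈ {M : SL2 | ∃ u, Bf M u < 0} →
    N ∈ {M : SL2 | ∃ u, Bf M u < 0} := by
  rintro M N h ⟨u, hu⟩
  rw [isConj_iff] at h
  obtain ⟨g, rfl⟩ := h
  exact ⟨g.1 *ᵥ u, by rwa [Bf_conj]⟩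

/-- The space of conjugacy classes of `SL(2, ℝ)`, i.e. the quotient of
`SL(2, ℝ)` by the equivalence relation "being conjugate", endowed with the
quotient topology, is a T0 space. -/
theorem stmt_19 :
    T0Space (Quotient (IsConj.setoid (Matrix.SpecialLinearGroup (Fin 2) ℝ))) := by
  rw [t0Space_iff_inseparable]
  intro qa qb h
  induction qa using Quotient.inductionOn with
  | h x =>
  induction qb using Quotient.inductionOn with
  | h y =>
  -- traces are equal
  have τcont : Continuous (Quotient.lift (fun M : SL2 => M.1.trace)
      (fun a b hab => trace_conj hab) : Quotient (IsConj.setoid SL2) → ℝ) := by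
    apply Continuous.quotient_lift
    have : (fun M : SL2 => M.1.trace) = fun M : SL2 => M.1 0 0 + M.1 1 1 := by
      funext M; rw [Matrix.trace_fin_two]
    rw [this]
    exact (centry 0 0).add (centry 1 1)
  have htr : x.1.trace = y.1.trace := (h.map τcont).eq
  have htr2 : x.1 0 0 + x.1 1 1 = y.1 0 0 + y.1 1 1 := by
    rw [Matrix.trace_fin_two, Matrix.trace_fin_two] at htr; exact htr
  by_cases hx : ∃ u, 0 < Bf x u
  · have hy : ∃ u, 0 < Bf y u := (key_sat _ isOpen_Opos inv_Opos x y h).1 hx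
    obtain ⟨u, hu⟩ := exists_one x hx
    obtain ⟨v, hv⟩ := exists_one y hy
    have c1 := isConj_C x u hu
    have c2 := isConj_C y v hv
    rw [htr2] at c1
    exact Quot.sound (c1.symm.trans c2)
  · by_cases hx' : ∃ u, Bf x u < 0
    · have hy' : ∃ u, Bf y u < 0 := (key_sat _ isOpen_Oneg inv_Oneg x y h).1 hx'
      obtain ⟨u, hu⟩ := exists_negone x hx'
      obtain ⟨v, hv⟩ := exists_negone y hy'
      have c1 := isConj_D x u hu
      have c2 := isConj_D y v hv
      rw [htr2] at c1
      exact Quot.sound (c1.symm.trans c2)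
    · -- x is ±1, and so is y
      have hy : ¬ ∃ u, 0 < Bf y u := fun hc =>
        hx ((key_sat _ isOpen_Opos inv_Opos x y h).2 hc)
      have hy' : ¬ ∃ u, Bf y u < 0 := fun hc =>
        hx' ((key_sat _ isOpen_Oneg inv_Oneg x y h).2 hc)
      push_neg at hx hx' hy hy'
      have hx0 : ∀ u, Bf x u = 0 := fun u => le_antisymm (hx u) (hx' u)
      have hy0 : ∀ u, Bf y u = 0 := fun u => le_antisymm (hy u) (hy' u)
      have hx1 := Bf_allzero x (hx0 _) (hx0 _) (hx0 _)
      have hy1 := Bf_allzero y (hy0 _) (hy0 _) (hy0 _)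
      have t1 : ((1 : SL2)).1 0 0 + ((1 : SL2)).1 1 1 = 2 := by norm_num
      have t2 : ((-1 : SL2)).1 0 0 + ((-1 : SL2)).1 1 1 = -2 := by simp; norm_num
      rcases hx1 with h1 | h1 <;> rcases hy1 with h2 | h2 <;> subst h1 <;> subst h2
      · rfl
      · rw [t1, t2] at htr2; norm_num at htr2
      · rw [t1, t2] at htr2; norm_num at htr2
      · rfl
end
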